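/- arXiv:1010.4076 — 2 statements merged into one kernel-verified Lean document; each statement's English description precedes it below -/
import Mathlib

section
/- With M := I_m + (q − q^{−1})DA and R := R[m], the quantum moment map identity holds on coordinate generators: A₂ R₂₁ M₁ R = M₁ A₂. (This is the matrix identity establishing that μ^e_v, l^i_j ↦ M^i_j, is a quantum moment map for the adjoint-type action on the generators a^m_n, i.e. μ(x)·y = (x₍₁₎ ▷ y)·μ(x₍₂₎) on these generators.) -/
open Matrix Kronecker

noncomputable section

/-- Coefficient matrix of the R-matrix `R[N]` on `k^N ⊗ k^N`: the entry in
row `(i,j)`, column `(s,t)` is `q^{δ_{ij}} δ_{is} δ_{jt} + (q-q⁻¹) θ(i-j) δ_{it} δ_{js}`,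
where `θ(x) = 1` if `x > 0` and `0` otherwise. -/
def Rmat (k : Type) [Field k] (q : k) (N : ℕ) :
    Matrix (Fin N × Fin N) (Fin N × Fin N) k :=
  Matrix.of fun p r =>
    (if p.1 = p.2 then q else 1) * (if p = r then 1 else 0)
      + (q - q⁻¹) * ((if p.2 < p.1 then (1 : k) else 0) *
          (if p.1 = r.2 ∧ p.2 = r.1 then 1 else 0))

/-- The explicit inverse of `R[N]`:
`(R⁻¹)^{ij}_{st} = q^{-δ_{ij}} δ_{is} δ_{jt} - (q-q⁻¹) θ(i-j) δ_{it} δ_{js}`. -/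
def RmatInv (k : Type) [Field k] (q : k) (N : ℕ) :
    Matrix (Fin N × Fin N) (Fin N × Fin N) k :=
  Matrix.of fun p r =>
    (if p.1 = p.2 then q⁻¹ else 1) * (if p = r then 1 else 0)
      - (q - q⁻¹) * ((if p.2 < p.1 then (1 : k) else 0) *
          (if p.1 = r.2 ∧ p.2 = r.1 then 1 else 0))

variable (k : Type) [Field k] (𝒜 : Type) [Ring 𝒜] [Algebra k 𝒜]

/-- `R[N]` regarded as a matrix over the `k`-algebra `𝒜`. -/
def RA (q : k) (N : ℕ) : Matrix (Fin N × Fin N) (Fin N × Fin N) 𝒜 :=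
  (Rmat k q N).map (algebraMap k 𝒜)

/-- `R[N]₂₁ := τ ∘ R[N] ∘ τ` regarded as a matrix over `𝒜`. -/
def RA21 (q : k) (N : ℕ) : Matrix (Fin N × Fin N) (Fin N × Fin N) 𝒜 :=
  Matrix.of fun p r => RA k 𝒜 q N (p.2, p.1) (r.2, r.1)

/-- `(R[N])⁻¹` regarded as a matrix over `𝒜`. -/
def RAinv (q : k) (N : ℕ) : Matrix (Fin N × Fin N) (Fin N × Fin N) 𝒜 :=
  (RmatInv k q N).map (algebraMap k 𝒜)

/-- `(R[N]₂₁)⁻¹ = (R[N]⁻¹)₂₁` regarded as a matrix over `𝒜`. -/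
def RAinv21 (q : k) (N : ℕ) : Matrix (Fin N × Fin N) (Fin N × Fin N) 𝒜 :=
  Matrix.of fun p r => RAinv k 𝒜 q N (p.2, p.1) (r.2, r.1)

/-- The flip `τ : k^m ⊗ k^n → k^n ⊗ k^m` as a matrix over `𝒜`. -/
def flipA (m n : ℕ) : Matrix (Fin n × Fin m) (Fin m × Fin n) 𝒜 :=
  Matrix.of fun p r => if p.1 = r.2 ∧ p.2 = r.1 then 1 else 0

/-- The defining relations (M1), (M2), (M3) of the quantized edge algebra `𝒟_q(e)`
of the Kronecker quiver with tail dimension `n` and head dimension `m`, for an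
`n × m` matrix `A` and an `m × n` matrix `D` over `𝒜`:
(M1) `R[n] A₂ A₁ = A₁ A₂ R[m]₂₁`, (M2) `R[m] D₂ D₁ = D₁ D₂ R[n]₂₁`,
(M3) `D₂ (R[n])⁻¹ A₁ = A₁ R[m] D₂ + τ`. -/
def EdgeRel (q : k) {n m : ℕ}
    (A : Matrix (Fin n) (Fin m) 𝒜) (D : Matrix (Fin m) (Fin n) 𝒜) : Prop :=
  RA k 𝒜 q n * ((1 : Matrix (Fin n) (Fin n) 𝒜) ⊗ₖ A) * (A ⊗ₖ (1 : Matrix (Fin m) (Fin m) 𝒜))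
      = (A ⊗ₖ (1 : Matrix (Fin n) (Fin n) 𝒜)) * ((1 : Matrix (Fin m) (Fin m) 𝒜) ⊗ₖ A)
          * RA21 k 𝒜 q m
    ∧ RA k 𝒜 q m * ((1 : Matrix (Fin m) (Fin m) 𝒜) ⊗ₖ D) * (D ⊗ₖ (1 : Matrix (Fin n) (Fin n) 𝒜))
      = (D ⊗ₖ (1 : Matrix (Fin m) (Fin m) 𝒜)) * ((1 : Matrix (Fin n) (Fin n) 𝒜) ⊗ₖ D)
          * RA21 k 𝒜 q n
    ∧ ((1 : Matrix (Fin n) (Fin n) 𝒜) ⊗ₖ D) * RAinv k 𝒜 q n * (A ⊗ₖ (1 : Matrix (Fin n) (Fin n) 𝒜))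
      = (A ⊗ₖ (1 : Matrix (Fin m) (Fin m) 𝒜)) * RA k 𝒜 q m * ((1 : Matrix (Fin m) (Fin m) 𝒜) ⊗ₖ D)
          + flipA 𝒜 m n

/-- The defining relations (L1), (L2), (L3) of the quantized loop edge algebra `𝒟_q(e)`
at a vertex of dimension `N`, with `R := R[N]`:
(L1) `R₂₁ A₁ R A₂ = A₂ R₂₁ A₁ R`, (L2) `R₂₁ D₁ R D₂ = D₂ R₂₁ D₁ R`,
(L3) `R₂₁ D₁ R A₂ = A₂ R₂₁ D₁ R₂₁⁻¹`. -/
def LoopRel (q : k) {N : ℕ} (A D : Matrix (Fin N) (Fin N) 𝒜) : Prop :=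
  RA21 k 𝒜 q N * (A ⊗ₖ (1 : Matrix (Fin N) (Fin N) 𝒜)) * RA k 𝒜 q N
        * ((1 : Matrix (Fin N) (Fin N) 𝒜) ⊗ₖ A)
      = ((1 : Matrix (Fin N) (Fin N) 𝒜) ⊗ₖ A) * RA21 k 𝒜 q N
        * (A ⊗ₖ (1 : Matrix (Fin N) (Fin N) 𝒜)) * RA k 𝒜 q N
    ∧ RA21 k 𝒜 q N * (D ⊗ₖ (1 : Matrix (Fin N) (Fin N) 𝒜)) * RA k 𝒜 q N
        * ((1 : Matrix (Fin N) (Fin N) 𝒜) ⊗ₖ D)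
      = ((1 : Matrix (Fin N) (Fin N) 𝒜) ⊗ₖ D) * RA21 k 𝒜 q N
        * (D ⊗ₖ (1 : Matrix (Fin N) (Fin N) 𝒜)) * RA k 𝒜 q N
    ∧ RA21 k 𝒜 q N * (D ⊗ₖ (1 : Matrix (Fin N) (Fin N) 𝒜)) * RA k 𝒜 q N
        * ((1 : Matrix (Fin N) (Fin N) 𝒜) ⊗ₖ A)
      = ((1 : Matrix (Fin N) (Fin N) 𝒜) ⊗ₖ A) * RA21 k 𝒜 q N
        * (D ⊗ₖ (1 : Matrix (Fin N) (Fin N) 𝒜)) * RAinv21 k 𝒜 q N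


/-! ### Auxiliary machinery for the proof -/

/-- The flip matrix `τ : k^a ⊗ k^b → k^b ⊗ k^a` over an arbitrary ring. -/
def Fl (ℬ : Type) [Ring ℬ] (a b : ℕ) : Matrix (Fin b × Fin a) (Fin a × Fin b) ℬ :=
  Matrix.of fun p r => if p.1 = r.2 ∧ p.2 = r.1 then 1 else 0

/-- `R[N]₂₁` over the field `k`. -/
def Rmat21 (k : Type) [Field k] (q : k) (N : ℕ) :
    Matrix (Fin N × Fin N) (Fin N × Fin N) k :=
  Matrix.of fun p r => Rmat k q N (p.2, p.1) (r.2, r.1)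

section AuxLemmas

variable {ℬ : Type} [Ring ℬ]

theorem Fl_mul_apply {a b : ℕ} {J : Type*} [Fintype J] (X : Matrix (Fin a × Fin b) J ℬ)
    (p : Fin b × Fin a) (r : J) : (Fl ℬ a b * X) p r = X (p.2, p.1) r := by
  simp only [Matrix.mul_apply, Fl, Matrix.of_apply, Fintype.sum_prod_type, ite_and, ite_mul,
    one_mul, zero_mul]
  rw [Finset.sum_eq_single p.2]
  · simp
  · intro s _ hs
    rw [Finset.sum_eq_zero]
    intro v _
    have : ¬ p.2 = s := fun h => hs h.symm
    simp [this]
  · simp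

theorem mul_Fl_apply {a b : ℕ} {I : Type*} [Fintype I] (X : Matrix I (Fin b × Fin a) ℬ)
    (p : I) (r : Fin a × Fin b) : (X * Fl ℬ a b) p r = X p (r.2, r.1) := by
  simp only [Matrix.mul_apply, Fl, Matrix.of_apply, Fintype.sum_prod_type, ite_and, mul_ite,
    mul_one, mul_zero]
  rw [Finset.sum_eq_single r.2]
  · simp
  · intro s _ hs
    rw [Finset.sum_eq_zero]
    intro v _
    simp [hs]
  · simp

theorem Fl_mul_Fl (a b : ℕ) : Fl ℬ a b * Fl ℬ b a = 1 := by
  ext p r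
  rw [Fl_mul_apply]
  simp only [Fl, Matrix.of_apply, Matrix.one_apply]
  by_cases h : p = r
  · subst h; simp
  · have : ¬ (p.2 = r.2 ∧ p.1 = r.1) := by
      intro hc
      exact h (Prod.ext hc.2 hc.1)
    simp [this, h]

theorem kron_one_mul_one_kron {a b c d : ℕ} (X : Matrix (Fin a) (Fin b) ℬ)
    (Y : Matrix (Fin c) (Fin d) ℬ) :
    (X ⊗ₖ (1 : Matrix (Fin c) (Fin c) ℬ)) * ((1 : Matrix (Fin b) (Fin b) ℬ) ⊗ₖ Y)
      = X ⊗ₖ Y := by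
  ext p r
  simp [Matrix.mul_apply, Matrix.kroneckerMap_apply, Fintype.sum_prod_type, Matrix.one_apply,
    ite_mul, mul_ite, Finset.sum_ite_eq, Finset.sum_ite_eq']

theorem kron_one_mul_kron_one {a b c d : ℕ} (X : Matrix (Fin a) (Fin b) ℬ)
    (X' : Matrix (Fin b) (Fin c) ℬ) :
    (X ⊗ₖ (1 : Matrix (Fin d) (Fin d) ℬ)) * (X' ⊗ₖ (1 : Matrix (Fin d) (Fin d) ℬ))
      = (X * X') ⊗ₖ (1 : Matrix (Fin d) (Fin d) ℬ) := by
  ext p r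
  simp [Matrix.mul_apply, Matrix.kroneckerMap_apply, Fintype.sum_prod_type, Matrix.one_apply,
    ite_mul, mul_ite, Finset.sum_ite_eq, Finset.sum_ite_eq', Finset.sum_mul]

/-- `(1_c ⊗ Z) P_c = τ (Z ⊗ 1_c)`. -/
theorem flipG1 {a c : ℕ} (Z : Matrix (Fin a) (Fin c) ℬ) :
    ((1 : Matrix (Fin c) (Fin c) ℬ) ⊗ₖ Z) * Fl ℬ c c
      = Fl ℬ a c * (Z ⊗ₖ (1 : Matrix (Fin c) (Fin c) ℬ)) := by
  ext p r
  rw [mul_Fl_apply, Fl_mul_apply]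
  simp only [Matrix.kroneckerMap_apply, Matrix.one_apply]
  split_ifs <;> simp

/-- `τ (1_c ⊗ Z) = (Z ⊗ 1_c) P_c`. -/
theorem flipG2 {a c : ℕ} (Z : Matrix (Fin a) (Fin c) ℬ) :
    Fl ℬ c a * ((1 : Matrix (Fin c) (Fin c) ℬ) ⊗ₖ Z)
      = (Z ⊗ₖ (1 : Matrix (Fin c) (Fin c) ℬ)) * Fl ℬ c c := by
  ext p r
  rw [mul_Fl_apply, Fl_mul_apply]
  simp only [Matrix.kroneckerMap_apply, Matrix.one_apply]
  split_ifs <;> simp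

/-- `P_c (Z ⊗ 1_c) = (1_c ⊗ Z) τ`. -/
theorem flipG3 {b c : ℕ} (Z : Matrix (Fin c) (Fin b) ℬ) :
    Fl ℬ c c * (Z ⊗ₖ (1 : Matrix (Fin c) (Fin c) ℬ))
      = ((1 : Matrix (Fin c) (Fin c) ℬ) ⊗ₖ Z) * Fl ℬ b c := by
  ext p r
  rw [mul_Fl_apply, Fl_mul_apply]
  simp only [Matrix.kroneckerMap_apply, Matrix.one_apply]
  split_ifs <;> simp

/-- `(Z ⊗ 1_c) τ = P_c (1_c ⊗ Z)`. -/
theorem flipG5 {b c : ℕ} (Z : Matrix (Fin c) (Fin b) ℬ) :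
    (Z ⊗ₖ (1 : Matrix (Fin c) (Fin c) ℬ)) * Fl ℬ c b
      = Fl ℬ c c * ((1 : Matrix (Fin c) (Fin c) ℬ) ⊗ₖ Z) := by
  ext p r
  rw [mul_Fl_apply, Fl_mul_apply]
  simp only [Matrix.kroneckerMap_apply, Matrix.one_apply]
  split_ifs <;> simp

end AuxLemmas

section ScalarLemmas

variable {k₀ : Type} [Field k₀]

theorem Rmat_mul_apply {q : k₀} {N : ℕ} {J : Type*} [Fintype J]
    (X : Matrix (Fin N × Fin N) J k₀) (p : Fin N × Fin N) (r : J) :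
    (Rmat k₀ q N * X) p r = (if p.1 = p.2 then q else 1) * X p r
      + (q - q⁻¹) * ((if p.2 < p.1 then (1:k₀) else 0) * X (p.2, p.1) r) := by
  simp only [Matrix.mul_apply, Rmat, Matrix.of_apply, add_mul, Finset.sum_add_distrib]
  congr 1
  · simp only [mul_ite, ite_mul, one_mul, zero_mul, mul_one, mul_zero]
    rw [Finset.sum_ite_eq]
    simp
  · have h : ∀ s : Fin N × Fin N, (p.1 = s.2 ∧ p.2 = s.1) ↔ ((p.2, p.1) = s) := by
      intro s; constructor
      · rintro ⟨h1, h2⟩; exact Prod.ext h2 h1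
      · rintro rfl; exact ⟨rfl, rfl⟩
    simp only [h, mul_ite, ite_mul, one_mul, zero_mul, mul_one, mul_zero]
    rw [Finset.sum_ite_eq]
    simp

theorem RmatInv_mul_apply {q : k₀} {N : ℕ} {J : Type*} [Fintype J]
    (X : Matrix (Fin N × Fin N) J k₀) (p : Fin N × Fin N) (r : J) :
    (RmatInv k₀ q N * X) p r = (if p.1 = p.2 then q⁻¹ else 1) * X p r
      - (q - q⁻¹) * ((if p.2 < p.1 then (1:k₀) else 0) * X (p.2, p.1) r) := by
  simp only [Matrix.mul_apply, RmatInv, Matrix.of_apply, sub_mul, Finset.sum_sub_distrib]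
  congr 1
  · simp only [mul_ite, ite_mul, one_mul, zero_mul, mul_one, mul_zero]
    rw [Finset.sum_ite_eq]
    simp
  · have h : ∀ s : Fin N × Fin N, (p.1 = s.2 ∧ p.2 = s.1) ↔ ((p.2, p.1) = s) := by
      intro s; constructor
      · rintro ⟨h1, h2⟩; exact Prod.ext h2 h1
      · rintro rfl; exact ⟨rfl, rfl⟩
    simp only [h, mul_ite, ite_mul, one_mul, zero_mul, mul_one, mul_zero]
    rw [Finset.sum_ite_eq]
    simp

theorem mul_Rmat_apply {q : k₀} {N : ℕ} {I : Type*} [Fintype I]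
    (X : Matrix I (Fin N × Fin N) k₀) (p : I) (r : Fin N × Fin N) :
    (X * Rmat k₀ q N) p r = X p r * (if r.1 = r.2 then q else 1)
      + (q - q⁻¹) * ((if r.1 < r.2 then (1:k₀) else 0) * X p (r.2, r.1)) := by
  simp only [Matrix.mul_apply, Rmat, Matrix.of_apply, mul_add, Finset.sum_add_distrib]
  congr 1
  · simp only [mul_ite, ite_mul, one_mul, zero_mul, mul_one, mul_zero]
    rw [Finset.sum_ite_eq']
    simp [mul_comm]
  · have h : ∀ s : Fin N × Fin N, ((if s.2 < s.1 then (1:k₀) else 0) *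
        (if s.1 = r.2 ∧ s.2 = r.1 then (1:k₀) else 0))
        = if s = (r.2, r.1) then (if r.1 < r.2 then (1:k₀) else 0) else 0 := by
      rintro ⟨s1, s2⟩
      by_cases h1 : s1 = r.2 <;> by_cases h2 : s2 = r.1 <;>
        simp [h1, h2, Prod.ext_iff]
    simp only [h, mul_ite, mul_zero]
    rw [Finset.sum_ite_eq']
    simp [mul_comm, mul_left_comm]

theorem Rmat_mul_RmatInv {q : k₀} (hq : q ≠ 0) (N : ℕ) :
    Rmat k₀ q N * RmatInv k₀ q N = 1 := by
  have hqq : q * q⁻¹ = 1 := mul_inv_cancel₀ hq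
  ext p r
  rw [Rmat_mul_apply]
  obtain ⟨i, j⟩ := p; obtain ⟨s, t⟩ := r
  simp only [RmatInv, Matrix.of_apply, Matrix.one_apply, Prod.mk.injEq]
  rcases lt_trichotomy i j with h | h | h
  · have h1 : ¬ i = j := ne_of_lt h
    have h2 : ¬ j < i := not_lt_of_gt h
    simp [h1, h2]
  · subst h
    simp [hqq, lt_irrefl, mul_sub, ← mul_assoc]
  · have h1 : ¬ i = j := (ne_of_lt h).symm
    have h2 : ¬ i < j := not_lt_of_gt h
    have h3 : ¬ j = i := ne_of_lt h
    simp only [h1, h2, h3, if_false, if_true, h, if_pos, one_mul, lt_irrefl]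
    by_cases e1 : i = t <;> by_cases e2 : j = s <;>
      simp [e1, e2, Prod.ext_iff, and_comm]

theorem RmatInv_mul_Rmat {q : k₀} (hq : q ≠ 0) (N : ℕ) :
    RmatInv k₀ q N * Rmat k₀ q N = 1 := by
  have hqq : q⁻¹ * q = 1 := inv_mul_cancel₀ hq
  ext p r
  rw [RmatInv_mul_apply]
  obtain ⟨i, j⟩ := p; obtain ⟨s, t⟩ := r
  simp only [Rmat, Matrix.of_apply, Matrix.one_apply, Prod.mk.injEq]
  rcases lt_trichotomy i j with h | h | h
  · have h1 : ¬ i = j := ne_of_lt h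
    have h2 : ¬ j < i := not_lt_of_gt h
    simp [h1, h2]
  · subst h
    have hqq2 : q * q⁻¹ = 1 := mul_inv_cancel₀ hq
    by_cases his : i = s <;> by_cases hit : i = t
    · obtain rfl := his; obtain rfl := hit
      simp [lt_irrefl]
      linear_combination hqq2
    · obtain rfl := his
      have : ¬ (i = t ∧ i = i) := fun hc => hit hc.1
      simp [hit, this, Ne.symm, lt_irrefl]
    · obtain rfl := hit
      have : ¬ (i = i ∧ i = s) := fun hc => his hc.2
      simp [his, this, lt_irrefl]
    · have h5 : ¬ (i = t ∧ i = s) := fun hc => hit hc.1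
      have h6 : ¬ (i = s ∧ i = t) := fun hc => his hc.1
      simp [h5, h6, his, lt_irrefl]
  · have h1 : ¬ i = j := (ne_of_lt h).symm
    have h2 : ¬ i < j := not_lt_of_gt h
    have h3 : ¬ j = i := ne_of_lt h
    simp only [h1, h2, h3, if_false, if_true, h, if_pos, one_mul, lt_irrefl]
    by_cases e1 : i = t <;> by_cases e2 : j = s <;>
      simp [e1, e2, Prod.ext_iff, and_comm] <;> ring

theorem Rmat21_mul_Rmat {q : k₀} (hq : q ≠ 0) (N : ℕ) :
    Rmat21 k₀ q N * Rmat k₀ q N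
      = 1 + (q - q⁻¹) • (Fl k₀ N N * Rmat k₀ q N) := by
  have hqq : q⁻¹ * q = 1 := inv_mul_cancel₀ hq
  ext p r
  rw [mul_Rmat_apply, Matrix.add_apply, Matrix.smul_apply, Fl_mul_apply, Matrix.one_apply]
  obtain ⟨i, j⟩ := p; obtain ⟨s, t⟩ := r
  simp only [Rmat21, Rmat, Matrix.of_apply, Prod.mk.injEq, smul_eq_mul]
  rcases lt_trichotomy i j with h | h | h
  · have h1 : ¬ i = j := ne_of_lt h
    have h2 : ¬ j = i := (ne_of_lt h).symm
    have h3 : ¬ j < i := not_lt_of_gt h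
    split_ifs <;> simp_all <;> (first | ring | (rw [mul_inv_cancel₀ hq]; ring))
  · subst h
    have hqq2 : q * q⁻¹ = 1 := mul_inv_cancel₀ hq
    by_cases his : i = s <;> by_cases hit : i = t
    · obtain rfl := his; obtain rfl := hit
      simp [lt_irrefl]
      linear_combination hqq
    · obtain rfl := his
      have h5 : ¬ (i = t ∧ i = i) := fun hc => hit hc.1
      have h6 : ¬ (i = i ∧ i = t) := fun hc => hit hc.2
      simp [hit, h5, h6, lt_irrefl, Ne.symm]
    · obtain rfl := hit
      have h5 : ¬ (i = i ∧ i = s) := fun hc => his hc.2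
      have h6 : ¬ (i = s ∧ i = i) := fun hc => his hc.1
      simp [his, h5, h6, lt_irrefl]
    · have h5 : ¬ (i = t ∧ i = s) := fun hc => hit hc.1
      have h6 : ¬ (i = s ∧ i = t) := fun hc => his hc.1
      simp [h5, h6, his, hit, lt_irrefl]
  · have h1 : ¬ i = j := (ne_of_lt h).symm
    have h2 : ¬ i < j := not_lt_of_gt h
    have h3 : ¬ j = i := ne_of_lt h
    split_ifs <;> simp_all <;> (first | ring | (rw [mul_inv_cancel₀ hq]; ring))

end ScalarLemmas

section Transfer

theorem RA_mul_RAinv {q : k} (hq : q ≠ 0) (N : ℕ) :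
    RA k 𝒜 q N * RAinv k 𝒜 q N = 1 := by
  rw [RA, RAinv, ← Matrix.map_mul, Rmat_mul_RmatInv hq,
    Matrix.map_one _ (RingHom.map_zero _) (RingHom.map_one _)]

theorem RAinv_mul_RA {q : k} (hq : q ≠ 0) (N : ℕ) :
    RAinv k 𝒜 q N * RA k 𝒜 q N = 1 := by
  rw [RA, RAinv, ← Matrix.map_mul, RmatInv_mul_Rmat hq,
    Matrix.map_one _ (RingHom.map_zero _) (RingHom.map_one _)]

theorem RA21_eq_map (q : k) (N : ℕ) :
    RA21 k 𝒜 q N = (Rmat21 k q N).map (algebraMap k 𝒜) := rfl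

theorem Fl_map (a b : ℕ) : (Fl k a b).map (algebraMap k 𝒜) = Fl 𝒜 a b := by
  ext p r
  simp [Fl, Matrix.map_apply, apply_ite (algebraMap k 𝒜)]

theorem RA21_conj (q : k) (N : ℕ) :
    RA21 k 𝒜 q N = Fl 𝒜 N N * RA k 𝒜 q N * Fl 𝒜 N N := by
  ext p r
  rw [mul_Fl_apply, Fl_mul_apply]
  rfl

theorem RA21_mul_RA {q : k} (hq : q ≠ 0) (N : ℕ) :
    RA21 k 𝒜 q N * RA k 𝒜 q N
      = 1 + (q - q⁻¹) • (Fl 𝒜 N N * RA k 𝒜 q N) := by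
  have h := Rmat21_mul_Rmat (k₀ := k) hq N
  have h2 : RA21 k 𝒜 q N * RA k 𝒜 q N
      = (Rmat21 k q N * Rmat k q N).map (algebraMap k 𝒜) := by
    rw [Matrix.map_mul, RA21_eq_map]; rfl
  rw [h2, h]
  ext p r
  simp only [Matrix.map_apply, Matrix.add_apply, Matrix.smul_apply, Matrix.one_apply,
    smul_eq_mul, _root_.map_add, _root_.map_mul, apply_ite (algebraMap k 𝒜),
    _root_.map_one, _root_.map_zero]
  rw [Fl_mul_apply, Fl_mul_apply]
  simp [RA, Matrix.map_apply, _root_.map_one, _root_.map_sub, _root_.map_mul, Algebra.smul_def]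

end Transfer

/-- Given matrices `A` (n × m) and `D` (m × n) over `𝒜` satisfying the
defining relations of the quantized edge algebra `𝒟_q(e)`, with `M := I_m + (q - q⁻¹) D A`
and `R := R[m]`, the quantum moment map identity holds on coordinate generators:
`A₂ R₂₁ M₁ R = M₁ A₂`.  (This is the matrix identity establishing that `μ^e_v`,
`l^i_j ↦ M^i_j`, is a quantum moment map for the adjoint-type action on the generators
`a^m_n`.) -/
theorem moment_map_identity_edge (q : k) (hq : q ≠ 0) {n m : ℕ}
    (A : Matrix (Fin n) (Fin m) 𝒜) (D : Matrix (Fin m) (Fin n) 𝒜)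
    (hrel : EdgeRel k 𝒜 q A D) :
    ((1 : Matrix (Fin m) (Fin m) 𝒜) ⊗ₖ A) * RA21 k 𝒜 q m
        * (((1 : Matrix (Fin m) (Fin m) 𝒜) + (q - q⁻¹) • (D * A)) ⊗ₖ (1 : Matrix (Fin m) (Fin m) 𝒜))
        * RA k 𝒜 q m
      = (((1 : Matrix (Fin m) (Fin m) 𝒜) + (q - q⁻¹) • (D * A)) ⊗ₖ (1 : Matrix (Fin n) (Fin n) 𝒜))
        * ((1 : Matrix (Fin m) (Fin m) 𝒜) ⊗ₖ A) := by
  obtain ⟨h1, -, h3⟩ := hrel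
  set Rm := RA k 𝒜 q m with hRm
  set Rn := RA k 𝒜 q n with hRn
  set RmI := RAinv k 𝒜 q m with hRmI
  set RnI := RAinv k 𝒜 q n with hRnI
  set Rm21 := RA21 k 𝒜 q m with hRm21
  set Pm := Fl 𝒜 m m with hPmdef
  set Pn := Fl 𝒜 n n with hPndef
  set F := Fl 𝒜 m n with hFdef
  set G := Fl 𝒜 n m with hGdef
  set A2 := (1 : Matrix (Fin m) (Fin m) 𝒜) ⊗ₖ A with hA2
  set A1m := A ⊗ₖ (1 : Matrix (Fin m) (Fin m) 𝒜) with hA1m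
  set A1n := A ⊗ₖ (1 : Matrix (Fin n) (Fin n) 𝒜) with hA1n
  set A2n := (1 : Matrix (Fin n) (Fin n) 𝒜) ⊗ₖ A with hA2n
  set D2m := (1 : Matrix (Fin m) (Fin m) 𝒜) ⊗ₖ D with hD2m
  set D1m := D ⊗ₖ (1 : Matrix (Fin m) (Fin m) 𝒜) with hD1m
  set D1n := D ⊗ₖ (1 : Matrix (Fin n) (Fin n) 𝒜) with hD1n
  set D2n := (1 : Matrix (Fin n) (Fin n) 𝒜) ⊗ₖ D with hD2n
  have hFl : flipA 𝒜 m n = F := rfl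
  rw [hFl] at h3
  -- basic inverses
  have hPm : Pm * Pm = 1 := Fl_mul_Fl m m
  have hPn : Pn * Pn = 1 := Fl_mul_Fl n n
  have hR21c : Rm21 = Pm * Rm * Pm := RA21_conj k 𝒜 q m
  have hH : Rm21 * Rm = 1 + (q - q⁻¹) • (Pm * Rm) := RA21_mul_RA k 𝒜 hq m
  have hRmRmI : Rm * RmI = 1 := RA_mul_RAinv k 𝒜 hq m
  have hRmIRm : RmI * Rm = 1 := RAinv_mul_RA k 𝒜 hq m
  have hRnIRn : RnI * Rn = 1 := RAinv_mul_RA k 𝒜 hq n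
  -- flip identities
  have f1 : A2 * Pm = G * A1m := flipG1 A
  have f2 : Pm * D1m = D2m * G := flipG3 D
  have f4 : G * D2n = D1n * Pn := flipG2 D
  have f5 : A1n * G = Pn * A2n := flipG5 A
  have f6 : Pn * A1n = A2n * F := flipG3 A
  have f7 : F * A2 = A1m * Pm := flipG2 A
  -- sandwiched versions
  have sPm : ∀ (J : Type) [Fintype J] (X : Matrix (Fin m × Fin m) J 𝒜),
      Pm * (Pm * X) = X := by
    intro J _ X; rw [← Matrix.mul_assoc, hPm, Matrix.one_mul]
  have sPn : ∀ (J : Type) [Fintype J] (X : Matrix (Fin n × Fin n) J 𝒜),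
      Pn * (Pn * X) = X := by
    intro J _ X; rw [← Matrix.mul_assoc, hPn, Matrix.one_mul]
  have sGF : ∀ (J : Type) [Fintype J] (X : Matrix (Fin m × Fin n) J 𝒜),
      G * (F * X) = X := by
    intro J _ X; rw [← Matrix.mul_assoc, hGdef, hFdef, Fl_mul_Fl, Matrix.one_mul]
  have sRm : ∀ (J : Type) [Fintype J] (X : Matrix (Fin m × Fin m) J 𝒜),
      Rm * (RmI * X) = X := by
    intro J _ X; rw [← Matrix.mul_assoc, hRmRmI, Matrix.one_mul]
  have sf1 : ∀ (J : Type) [Fintype J] (X : Matrix (Fin m × Fin m) J 𝒜),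
      A2 * (Pm * X) = G * (A1m * X) := by
    intro J _ X; rw [← Matrix.mul_assoc, f1, Matrix.mul_assoc]
  have sf2 : ∀ (J : Type) [Fintype J] (X : Matrix (Fin n × Fin m) J 𝒜),
      Pm * (D1m * X) = D2m * (G * X) := by
    intro J _ X; rw [← Matrix.mul_assoc, f2, Matrix.mul_assoc]
  have sf4 : ∀ (J : Type) [Fintype J] (X : Matrix (Fin n × Fin n) J 𝒜),
      G * (D2n * X) = D1n * (Pn * X) := by
    intro J _ X; rw [← Matrix.mul_assoc, f4, Matrix.mul_assoc]
  have sf5 : ∀ (J : Type) [Fintype J] (X : Matrix (Fin n × Fin m) J 𝒜),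
      A1n * (G * X) = Pn * (A2n * X) := by
    intro J _ X; rw [← Matrix.mul_assoc, f5, Matrix.mul_assoc]
  have sf6 : ∀ (J : Type) [Fintype J] (X : Matrix (Fin m × Fin n) J 𝒜),
      Pn * (A1n * X) = A2n * (F * X) := by
    intro J _ X; rw [← Matrix.mul_assoc, f6, Matrix.mul_assoc]
  have sf7 : ∀ (J : Type) [Fintype J] (X : Matrix (Fin m × Fin m) J 𝒜),
      F * (A2 * X) = A1m * (Pm * X) := by
    intro J _ X; rw [← Matrix.mul_assoc, f7, Matrix.mul_assoc]
  -- right-associated forms of the hypotheses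
  simp only [Matrix.mul_assoc] at h1 h3
  -- h1 : Rn * (A2n * A1m) = A1n * (A2 * Rm21)
  -- h3 : D2n * (RnI * A1n) = A1m * (Rm * D2m) + F
  have h3' : A1m * (Rm * D2m) = D2n * (RnI * A1n) - F := by
    rw [h3, add_sub_cancel_right]
  have sh3 : ∀ (J : Type) [Fintype J] (X : Matrix (Fin m × Fin n) J 𝒜),
      A1m * (Rm * (D2m * X)) = D2n * (RnI * (A1n * X)) - F * X := by
    intro J _ X
    calc A1m * (Rm * (D2m * X)) = (A1m * (Rm * D2m)) * X := by
          simp only [Matrix.mul_assoc]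
      _ = (D2n * (RnI * A1n) - F) * X := by rw [h3']
      _ = D2n * (RnI * (A1n * X)) - F * X := by
          rw [Matrix.sub_mul]; simp only [Matrix.mul_assoc]
  -- the conjugated form of (M1)
  have hBB : Pn * (A1n * (A2 * Pm)) = A2n * A1m := by
    rw [sf6, sf7, hPm, Matrix.mul_one]
  have s1 : Rm21 * (Pm * (RmI * Pm)) = 1 := by
    rw [hR21c]
    simp only [Matrix.mul_assoc]
    rw [sPm, sRm, hPm]
  have s2 : A1n * A2 = Rn * ((A2n * A1m) * (Pm * (RmI * Pm))) := by
    calc A1n * A2 = (A1n * A2) * (Rm21 * (Pm * (RmI * Pm))) := by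
          rw [s1, Matrix.mul_one]
      _ = (A1n * (A2 * Rm21)) * (Pm * (RmI * Pm)) := by simp only [Matrix.mul_assoc]
      _ = (Rn * (A2n * A1m)) * (Pm * (RmI * Pm)) := by rw [h1]
      _ = Rn * ((A2n * A1m) * (Pm * (RmI * Pm))) := by rw [Matrix.mul_assoc]
  have s3 : RnI * (A1n * A2) = (A2n * A1m) * (Pm * (RmI * Pm)) := by
    rw [s2, ← Matrix.mul_assoc, hRnIRn, Matrix.one_mul]
  have s4 : Pn * (A2n * (A1m * Rm)) = (A1n * A2) * (Pm * Rm) := by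
    calc Pn * (A2n * (A1m * Rm)) = (Pn * (A2n * A1m)) * Rm := by
          simp only [Matrix.mul_assoc]
      _ = (Pn * (Pn * (A1n * (A2 * Pm)))) * Rm := by rw [hBB]
      _ = (A1n * (A2 * Pm)) * Rm := by rw [sPn]
      _ = (A1n * A2) * (Pm * Rm) := by simp only [Matrix.mul_assoc]
  have hAA : Pn * (RnI * (Pn * (A2n * (A1m * Rm)))) = A1n * A2 := by
    rw [s4, ← Matrix.mul_assoc RnI, s3]
    simp only [Matrix.mul_assoc]
    rw [sPm, hRmIRm, Matrix.mul_one]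
    -- Pn * (A2n * (A1m * Pm)) = A1n * A2
    rw [← Matrix.mul_assoc A2n A1m Pm, ← Matrix.mul_assoc Pn, ← hBB, sPn]
    simp only [Matrix.mul_assoc]
    rw [hPm, Matrix.mul_one]
  -- the key identity
  have hkey : A2 * (Pm * Rm) + A2 * (Rm21 * (D1m * (A1m * Rm))) = D1n * (A1n * A2) := by
    have t2 : A2 * (Rm21 * (D1m * (A1m * Rm))) = D1n * (A1n * A2) - A2 * (Pm * Rm) := by
      rw [hR21c]
      simp only [Matrix.mul_assoc]
      rw [sf2, sf1, sh3, Matrix.mul_sub, sf4, sf5, hAA, sGF, ← sf1]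
    rw [t2]
    abel
  -- final assembly
  rw [Matrix.add_kronecker, Matrix.add_kronecker, Matrix.smul_kronecker,
    Matrix.smul_kronecker, Matrix.one_kronecker_one, Matrix.one_kronecker_one,
    ← kron_one_mul_kron_one (d := m) D A, ← kron_one_mul_kron_one (d := n) D A]
  simp only [← hA1m, ← hA1n, ← hD1m, ← hD1n]
  simp only [Matrix.mul_add, Matrix.add_mul, Matrix.mul_smul, Matrix.smul_mul,
    Matrix.mul_one, Matrix.one_mul, Matrix.mul_assoc]
  rw [hH]
  simp only [Matrix.mul_add, Matrix.mul_one, Matrix.mul_smul]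
  rw [add_assoc, ← smul_add, hkey]
end
end

section
/- Let M be a right S-module which is ℏ-torsion-free and ℏ-adically separated and complete as an R-module (topologically free), and such that M₀ := M/ℏM is a flat right module over S₀ := S/ℏS. Then Tor_i^R(M ⊗_S R_χ, k) = 0 for all i ≥ 1, where R_χ denotes R viewed as a left S-module via χ and k = R/ℏR; in particular M ⊗_S R_χ is ℏ-torsion-free, i.e. it is a flat formal deformation of M₀ ⊗_{S₀} k_{χ₀}, and (M ⊗_S R_χ) ⊗_R k ≅ M₀ ⊗_{S₀} k_{χ₀}. -/
/-!
Write `N = (ker χ)·M`. If `ℏx ∈ N`, say `ℏx = ∑ sᵢ yᵢ` with `χ sᵢ = 0`, reduction mod `ℏ` gives a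
relation `∑ π(sᵢ) ρ(yᵢ) = 0` in the flat `S₀`-module `M₀`. By the equational criterion for
flatness it is trivial: `ρ(yᵢ) = ∑ⱼ aᵢⱼ wⱼ` with `∑ᵢ π(sᵢ) aᵢⱼ = 0`. Lifting to `S` and `M` gives
`∑ᵢ sᵢ Aᵢⱼ = Cⱼ ℏ`, where `χ(Cⱼ) ℏ = 0` forces `Cⱼ ∈ ker χ`, and `ℏx = ℏ (∑ⱼ Cⱼ Wⱼ + ∑ᵢ sᵢ zᵢ)`;
as `M` has no `ℏ`-torsion, `x ∈ N`.

The special fibre is the first isomorphism theorem for `M → M₀ → M₀/(ker χ₀)M₀`: every element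
of `ker χ₀` lifts to `ker χ`, since if `χ₀ (π s) = 0` then `s - χ(s)` lies in `ker χ` and has the
same reduction as `s`.
-/

open PowerSeries

/-- `(ker χ)·N`; when `χ` is surjective, `N ⧸ kerSMulSpan A N χ` is `N ⊗_T U_χ`. -/
def kerSMulSpan (A N : Type*) {T U : Type*} [Semiring A] [Ring T] [Semiring U]
    [AddCommGroup N] [Module A N] [Module T N] (χ : T →+* U) : Submodule A N :=
  Submodule.span A {x : N | ∃ s ∈ RingHom.ker χ, ∃ y : N, x = s • y}

section KerSMulSpan

variable {A T U N : Type*} [Ring T] [Semiring U] [AddCommGroup N] [Module T N] {χ : T →+* U}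

theorem smul_mem_kerSMulSpan [Semiring A] [Module A N] {s : T} (hs : χ s = 0) (y : N) :
    s • y ∈ kerSMulSpan A N χ :=
  Submodule.subset_span ⟨s, hs, y, rfl⟩

theorem mem_kerSMulSpan_iff [CommSemiring A] [Algebra A T] [Module A N] [IsScalarTower A T N]
    {v : N} :
    v ∈ kerSMulSpan A N χ ↔ ∃ (n : ℕ) (s : Fin n → T) (y : Fin n → N),
      (∀ i, χ (s i) = 0) ∧ v = ∑ i, s i • y i := by
  constructor
  · intro hv
    obtain ⟨n, c, g, rfl⟩ := Submodule.mem_span_set'.mp hv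
    choose s hs y hy using fun i => (g i).2
    refine ⟨n, fun i => algebraMap A T (c i) * s i, y, fun i => ?_, ?_⟩
    · rw [map_mul, RingHom.mem_ker.mp (hs i), mul_zero]
    · simp only [hy, mul_smul, algebraMap_smul]
  · rintro ⟨n, s, y, hs, rfl⟩
    exact sum_mem fun i _ => smul_mem_kerSMulSpan (hs i) (y i)

end KerSMulSpan

theorem mem_span_setOf_eq_smul_iff {R M : Type*} [CommSemiring R] [AddCommMonoid M]
    [Module R M] (h : R) {x : M} :
    x ∈ Submodule.span R {x : M | ∃ y, x = h • y} ↔ ∃ y, x = h • y := by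
  refine ⟨fun hx => ?_, fun hx => Submodule.subset_span hx⟩
  induction hx using Submodule.span_induction with
  | mem x hx => exact hx
  | zero => exact ⟨0, (smul_zero h).symm⟩
  | add x x' _ _ hx hx' =>
    obtain ⟨y, rfl⟩ := hx
    obtain ⟨y', rfl⟩ := hx'
    exact ⟨y + y', (smul_add h y y').symm⟩
  | smul r x _ hx =>
    obtain ⟨y, rfl⟩ := hx
    exact ⟨r • y, smul_comm r h y⟩

theorem image_ker_eq_ker {R S S₀ K : Type*} [CommRing R] [Ring S] [Algebra R S] [Ring S₀]
    [Semiring K] {π : S →+* S₀} {χ : S →+* R} {χ₀ : S₀ →+* K} {ε : R →+* K}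
    (hπ : Function.Surjective π) (hχ : ∀ r, χ (algebraMap R S r) = r)
    (hχ₀ : ∀ s, χ₀ (π s) = ε (χ s)) (hε : ∀ u, ε u = 0 → π (algebraMap R S u) = 0) :
    π '' RingHom.ker χ = RingHom.ker χ₀ := by
  ext t
  constructor
  · rintro ⟨s, hs, rfl⟩
    rw [SetLike.mem_coe, RingHom.mem_ker, hχ₀, RingHom.mem_ker.mp hs, map_zero]
  · intro ht
    obtain ⟨s, rfl⟩ := hπ t
    refine ⟨s - algebraMap R S (χ s), by rw [SetLike.mem_coe, RingHom.mem_ker, map_sub, hχ,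
      sub_self], ?_⟩
    rw [map_sub, hε _ (by rw [← hχ₀]; exact ht), sub_zero]

structure IsReductionMod {R S S₀ M M₀ : Type*} [CommRing R] [Ring S] [CommRing S₀]
    [AddCommGroup M] [Module R M] [Module S M] [AddCommGroup M₀] [Module S₀ M₀]
    (h : R) (π : S →+* S₀) (ρ : M →+ M₀) : Prop where
  surjective : Function.Surjective ρ
  map_smul : ∀ (s : S) (x : M), ρ (s • x) = π s • ρ x
  map_eq_zero_iff : ∀ x, ρ x = 0 ↔ ∃ y, x = h • y

namespace IsReductionMod

variable {R S S₀ K M M₀ : Type*} [CommRing R] [Ring S] [CommRing S₀] [Semiring K]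
  [AddCommGroup M] [Module S M] [Module R M] [AddCommGroup M₀] [Module S₀ M₀]
  {h : R} {π : S →+* S₀} {ρ : M →+ M₀} {χ : S →+* R} {χ₀ : S₀ →+* K}

theorem map_sum_smul (hρ : IsReductionMod h π ρ) {n : ℕ} (s : Fin n → S) (y : Fin n → M) :
    ρ (∑ i, s i • y i) = ∑ i, π (s i) • ρ (y i) := by
  simp only [map_sum, hρ.map_smul]

theorem exists_mem_kerSMulSpan_map_eq (hρ : IsReductionMod h π ρ)
    (hker : π '' RingHom.ker χ = RingHom.ker χ₀) {m₀ : M₀}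
    (hm₀ : m₀ ∈ kerSMulSpan S₀ M₀ χ₀) : ∃ v ∈ kerSMulSpan R M χ, ρ v = m₀ := by
  obtain ⟨n, t, w, ht, rfl⟩ := mem_kerSMulSpan_iff.mp hm₀
  choose s hs hst using fun i => (Set.ext_iff.mp hker (t i)).mpr (ht i)
  choose y hy using fun i => hρ.surjective (w i)
  refine ⟨∑ i, s i • y i, sum_mem fun i _ => smul_mem_kerSMulSpan (hs i) (y i), ?_⟩
  simp only [hρ.map_sum_smul, hst, hy]

variable [Algebra R S]

theorem exists_lift_of_sum_smul_eq_zero [Module.Flat S₀ M₀] (hρ : IsReductionMod h π ρ)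
    (hπ : Function.Surjective π) (hπker : ∀ s, π s = 0 → s ∈ Ideal.span {algebraMap R S h})
    {n : ℕ} (s : Fin n → S) (y : Fin n → M) (hrel : ∑ i, π (s i) • ρ (y i) = 0) :
    ∃ (m : ℕ) (A : Fin n → Fin m → S) (C : Fin m → S) (W : Fin m → M) (z : Fin n → M),
      (∀ j, ∑ i, s i * A i j = C j * algebraMap R S h) ∧
        ∀ i, y i = ∑ j, A i j • W j + h • z i := by
  obtain ⟨m, a, w, hw, ha⟩ := Module.Flat.isTrivialRelation_of_sum_smul_eq_zero hrel
  choose A hA using fun i j => hπ (a i j)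
  choose W hW using fun j => hρ.surjective (w j)
  have hC : ∀ j, ∃ C, ∑ i, s i * A i j = C * algebraMap R S h := fun j => by
    obtain ⟨C, hC⟩ := Ideal.mem_span_singleton'.mp
      (hπker (∑ i, s i * A i j) (by simpa only [map_sum, map_mul, hA] using ha j))
    exact ⟨C, hC.symm⟩
  have hz : ∀ i, ∃ z, y i = ∑ j, A i j • W j + h • z := fun i => by
    have : ρ (y i - ∑ j, A i j • W j) = 0 := by
      rw [map_sub, hρ.map_sum_smul, sub_eq_zero]
      simpa only [hA, hW] using hw i
    obtain ⟨z, hz⟩ := (hρ.map_eq_zero_iff _).mp this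
    exact ⟨z, sub_eq_iff_eq_add'.mp hz⟩
  choose C hC using hC
  choose z hz using hz
  exact ⟨m, A, C, W, z, hC, hz⟩

variable [IsScalarTower R S M]

theorem exists_mem_kerSMulSpan_sum_smul_eq_smul [Module.Flat S₀ M₀] (hρ : IsReductionMod h π ρ)
    (hπ : Function.Surjective π) (hπker : ∀ s, π s = 0 → s ∈ Ideal.span {algebraMap R S h})
    (hh : h ∈ nonZeroDivisors R) (hχ : ∀ r, χ (algebraMap R S r) = r)
    {n : ℕ} {s : Fin n → S} (hs : ∀ i, χ (s i) = 0) (y : Fin n → M)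
    (hrel : ∑ i, π (s i) • ρ (y i) = 0) :
    ∃ v ∈ kerSMulSpan R M χ, ∑ i, s i • y i = h • v := by
  obtain ⟨m, A, C, W, z, hC, hy⟩ := hρ.exists_lift_of_sum_smul_eq_zero hπ hπker s y hrel
  have hCχ : ∀ j, χ (C j) = 0 := fun j => (mul_right_mem_nonZeroDivisors_eq_zero_iff hh).mp <| by
    rw [← hχ h, ← map_mul, ← hC j, map_sum]
    exact Finset.sum_eq_zero fun i _ => by rw [map_mul, hs i, zero_mul]
  refine ⟨∑ j, C j • W j + ∑ i, s i • z i,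
    add_mem (sum_mem fun j _ => smul_mem_kerSMulSpan (hCχ j) (W j))
      (sum_mem fun i _ => smul_mem_kerSMulSpan (hs i) (z i)), ?_⟩
  calc ∑ i, s i • y i = ∑ j, (∑ i, s i * A i j) • W j + h • ∑ i, s i • z i := by
        simp only [hy, smul_add, Finset.sum_add_distrib, Finset.smul_sum, smul_smul,
          smul_comm (s _) h, Finset.sum_smul]
        rw [Finset.sum_comm]
    _ = h • (∑ j, C j • W j + ∑ i, s i • z i) := by
        simp only [hC, mul_smul, algebraMap_smul, smul_comm _ h, Finset.smul_sum, smul_add]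

theorem isSMulRegular_quotient_kerSMulSpan [Module.Flat S₀ M₀] (hρ : IsReductionMod h π ρ)
    (hπ : Function.Surjective π) (hπker : ∀ s, π s = 0 → s ∈ Ideal.span {algebraMap R S h})
    (hh : h ∈ nonZeroDivisors R) (hχ : ∀ r, χ (algebraMap R S r) = r)
    (hM : IsSMulRegular M h) : IsSMulRegular (M ⧸ kerSMulSpan R M χ) h := by
  refine IsSMulRegular.of_right_eq_zero_of_smul fun z hz => ?_
  obtain ⟨x, rfl⟩ := Submodule.Quotient.mk_surjective _ z
  rw [← Submodule.Quotient.mk_smul, Submodule.Quotient.mk_eq_zero] at hz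
  obtain ⟨n, s, y, hs, hx⟩ := mem_kerSMulSpan_iff.mp hz
  have hrel : ∑ i, π (s i) • ρ (y i) = 0 := by
    rw [← hρ.map_sum_smul, ← hx, hρ.map_eq_zero_iff]
    exact ⟨x, rfl⟩
  obtain ⟨v, hv, hxv⟩ := hρ.exists_mem_kerSMulSpan_sum_smul_eq_smul hπ hπker hh hχ hs y hrel
  rw [Submodule.Quotient.mk_eq_zero, hM (hx.trans hxv)]
  exact hv

theorem map_mem_kerSMulSpan_iff (hρ : IsReductionMod h π ρ)
    (hker : π '' RingHom.ker χ = RingHom.ker χ₀) (x : M) :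
    ρ x ∈ kerSMulSpan S₀ M₀ χ₀ ↔
      x ∈ kerSMulSpan R M χ ⊔ Submodule.span R {x : M | ∃ y, x = h • y} := by
  constructor
  · intro hx
    obtain ⟨v, hv, hρv⟩ := hρ.exists_mem_kerSMulSpan_map_eq hker hx
    have hxv : ρ (x - v) = 0 := by rw [map_sub, hρv, sub_self]
    rw [← add_sub_cancel v x]
    exact Submodule.add_mem_sup hv
      ((mem_span_setOf_eq_smul_iff h).mpr ((hρ.map_eq_zero_iff _).mp hxv))
  · intro hx
    obtain ⟨a, ha, b, hb, rfl⟩ := Submodule.mem_sup.mp hx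
    rw [map_add, (hρ.map_eq_zero_iff b).mpr ((mem_span_setOf_eq_smul_iff h).mp hb), add_zero]
    obtain ⟨n, s, y, hs, rfl⟩ := mem_kerSMulSpan_iff.mp ha
    rw [hρ.map_sum_smul]
    exact sum_mem fun i _ => smul_mem_kerSMulSpan (hker.subset (Set.mem_image_of_mem π (hs i))) _

theorem nonempty_quotient_addEquiv (hρ : IsReductionMod h π ρ)
    (hker : π '' RingHom.ker χ = RingHom.ker χ₀) :
    Nonempty ((M ⧸ (kerSMulSpan R M χ ⊔ Submodule.span R {x : M | ∃ y, x = h • y})) ≃+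
      (M₀ ⧸ kerSMulSpan S₀ M₀ χ₀)) := by
  let φ : M →+ M₀ ⧸ kerSMulSpan S₀ M₀ χ₀ := (kerSMulSpan S₀ M₀ χ₀).mkQ.toAddMonoidHom.comp ρ
  have hφ : Function.Surjective φ := (Submodule.mkQ_surjective _).comp hρ.surjective
  have hφker : φ.ker =
      (kerSMulSpan R M χ ⊔ Submodule.span R {x : M | ∃ y, x = h • y}).toAddSubgroup :=
    AddSubgroup.ext fun x =>
      (Submodule.Quotient.mk_eq_zero _).trans (hρ.map_mem_kerSMulSpan_iff hker x)
  exact ⟨(QuotientAddGroup.quotientAddEquivOfEq hφker.symm).trans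
    (QuotientAddGroup.quotientKerEquivOfSurjective φ hφ)⟩

end IsReductionMod

theorem hamiltonian_reduction_flat_general {k : Type} [Field k]
    -- the deformed algebra S
    (S : Type) [Ring S] [Algebra (PowerSeries k) S]
    -- its special fibre S₀ ≅ k[x₁,…,xₙ]
    (S₀ : Type) [CommRing S₀]
    (π : S →+* S₀) (hπsurj : Function.Surjective π)
    (hπker : ∀ s : S, π s = 0 ↔
      s ∈ Ideal.span {algebraMap (PowerSeries k) S PowerSeries.X})
    -- the character χ and its reduction χ₀
    (χ : S →+* PowerSeries k)
    (hχ : ∀ r : PowerSeries k, χ (algebraMap (PowerSeries k) S r) = r)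
    (χ₀ : S₀ →+* k)
    (hχ₀ : ∀ s : S, χ₀ (π s) = PowerSeries.constantCoeff (χ s))
    -- the module M, topologically free over k[[ℏ]]
    (M : Type) [AddCommGroup M] [Module S M]
    [Module (PowerSeries k) M] [IsScalarTower (PowerSeries k) S M]
    (hMtf : ∀ x : M, (PowerSeries.X : PowerSeries k) • x = 0 → x = 0)
    -- its special fibre M₀ = M/ℏM, flat over S₀
    (M₀ : Type) [AddCommGroup M₀] [Module S₀ M₀]
    (ρ : M →+ M₀) (hρsurj : Function.Surjective ρ)
    (hρcompat : ∀ (s : S) (x : M), ρ (s • x) = π s • ρ x)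
    (hρker : ∀ x : M, ρ x = 0 ↔ ∃ y : M, x = (PowerSeries.X : PowerSeries k) • y)
    (hflat : Module.Flat S₀ M₀) :
    -- (1) the reduction M/(ker χ)M is ℏ-torsion-free (all higher Tor's over k[[ℏ]]
    --     against the residue field vanish): it is a flat formal deformation
    (∀ z : M ⧸ (Submodule.span (PowerSeries k)
        {x : M | ∃ s ∈ RingHom.ker χ, ∃ y : M, x = s • y}),
      (PowerSeries.X : PowerSeries k) • z = 0 → z = 0)
    -- (2) its special fibre is M₀ ⊗_{S₀} k_{χ₀} = M₀/(ker χ₀)M₀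
    ∧ Nonempty
        ((M ⧸ (Submodule.span (PowerSeries k)
            {x : M | ∃ s ∈ RingHom.ker χ, ∃ y : M, x = s • y}
          ⊔ Submodule.span (PowerSeries k)
            {x : M | ∃ y : M, x = (PowerSeries.X : PowerSeries k) • y}))
        ≃+ (M₀ ⧸ (Submodule.span S₀
            {x : M₀ | ∃ s ∈ RingHom.ker χ₀, ∃ y : M₀, x = s • y}))) := by
  have hρ : IsReductionMod (X : PowerSeries k) π ρ := ⟨hρsurj, hρcompat, hρker⟩
  have hε : ∀ u : PowerSeries k, constantCoeff u = 0 → π (algebraMap _ S u) = 0 := by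
    intro u hu
    obtain ⟨v, rfl⟩ := X_dvd_iff.mpr hu
    rw [map_mul, map_mul, (hπker _).mpr (Ideal.mem_span_singleton_self _), zero_mul]
  have hker : π '' RingHom.ker χ = RingHom.ker χ₀ := image_ker_eq_ker hπsurj hχ hχ₀ hε
  refine ⟨fun z => ?_, hρ.nonempty_quotient_addEquiv hker⟩
  exact (hρ.isSMulRegular_quotient_kerSMulSpan hπsurj (fun s => (hπker s).mp)
    (mem_nonZeroDivisors_of_ne_zero X_ne_zero) hχ
    (.of_right_eq_zero_of_smul hMtf)).right_eq_zero_of_smul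

/-- Let `R := k[[ℏ]]`, and let `S` be a unital associative `R`-algebra
which is a flat formal deformation of the polynomial ring in `n` variables: `S` is
`ℏ`-torsion-free, `ℏ`-adically separated and complete, and `S₀ := S/ℏS` is isomorphic as
a `k`-algebra to `k[x₁,…,xₙ]` (here `S₀` is presented abstractly, via a surjection
`π : S → S₀` with kernel `ℏS`).  Let `χ : S → R` be a character with reduction
`χ₀ : S₀ → k`.  Let `M` be an `S`-module which is `ℏ`-torsion-free and `ℏ`-adically
separated and complete, and such that `M₀ := M/ℏM` (presented abstractly via a
surjection `ρ : M → M₀` with kernel `ℏM`) is flat over `S₀`.  Then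
`M ⊗_S R_χ ≅ M / (ker χ)·M` is `ℏ`-torsion-free — i.e. `Tor_i^R(M ⊗_S R_χ, k) = 0` for
all `i ≥ 1`, so `M ⊗_S R_χ` is a flat formal deformation of `M₀ ⊗_{S₀} k_{χ₀}` — and
`(M ⊗_S R_χ) ⊗_R k ≅ M₀ ⊗_{S₀} k_{χ₀}` (the latter identified with
`M₀ / (ker χ₀)·M₀`). -/
theorem hamiltonian_reduction_flat {k : Type} [Field k] (n : ℕ)
    -- the deformed algebra S
    (S : Type) [Ring S] [Algebra (PowerSeries k) S]
    (hStf : ∀ s : S, (PowerSeries.X : PowerSeries k) • s = 0 → s = 0)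
    (hScompl : IsAdicComplete (Ideal.span {(PowerSeries.X : PowerSeries k)}) S)
    -- its special fibre S₀ ≅ k[x₁,…,xₙ]
    (S₀ : Type) [CommRing S₀] [Algebra k S₀]
    (π : S →+* S₀) (hπsurj : Function.Surjective π)
    (hπker : ∀ s : S, π s = 0 ↔
      s ∈ Ideal.span {algebraMap (PowerSeries k) S PowerSeries.X})
    (hpoly : Nonempty (S₀ ≃ₐ[k] MvPolynomial (Fin n) k))
    -- the character χ and its reduction χ₀
    (χ : S →+* PowerSeries k)
    (hχ : ∀ r : PowerSeries k, χ (algebraMap (PowerSeries k) S r) = r)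
    (χ₀ : S₀ →+* k)
    (hχ₀ : ∀ s : S, χ₀ (π s) = PowerSeries.constantCoeff (χ s))
    -- the module M, topologically free over k[[ℏ]]
    (M : Type) [AddCommGroup M] [Module S M]
    [Module (PowerSeries k) M] [IsScalarTower (PowerSeries k) S M]
    (hMtf : ∀ x : M, (PowerSeries.X : PowerSeries k) • x = 0 → x = 0)
    (hMcompl : IsAdicComplete (Ideal.span {(PowerSeries.X : PowerSeries k)}) M)
    -- its special fibre M₀ = M/ℏM, flat over S₀
    (M₀ : Type) [AddCommGroup M₀] [Module S₀ M₀]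
    (ρ : M →+ M₀) (hρsurj : Function.Surjective ρ)
    (hρcompat : ∀ (s : S) (x : M), ρ (s • x) = π s • ρ x)
    (hρker : ∀ x : M, ρ x = 0 ↔ ∃ y : M, x = (PowerSeries.X : PowerSeries k) • y)
    (hflat : Module.Flat S₀ M₀) :
    -- (1) the reduction M/(ker χ)M is ℏ-torsion-free (all higher Tor's over k[[ℏ]]
    --     against the residue field vanish): it is a flat formal deformation
    (∀ z : M ⧸ (Submodule.span (PowerSeries k)
        {x : M | ∃ s ∈ RingHom.ker χ, ∃ y : M, x = s • y}),
      (PowerSeries.X : PowerSeries k) • z = 0 → z = 0)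
    -- (2) its special fibre is M₀ ⊗_{S₀} k_{χ₀} = M₀/(ker χ₀)M₀
    ∧ Nonempty
        ((M ⧸ (Submodule.span (PowerSeries k)
            {x : M | ∃ s ∈ RingHom.ker χ, ∃ y : M, x = s • y}
          ⊔ Submodule.span (PowerSeries k)
            {x : M | ∃ y : M, x = (PowerSeries.X : PowerSeries k) • y}))
        ≃+ (M₀ ⧸ (Submodule.span S₀
            {x : M₀ | ∃ s ∈ RingHom.ker χ₀, ∃ y : M₀, x = s • y}))) :=
  hamiltonian_reduction_flat_general S S₀ π hπsurj hπker χ hχ χ₀ hχ₀ M hMtf M₀ ρ hρsurj hρcompat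
    hρker hflat
end
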